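/- (Sageev) Let G be a group with finite generating set S and let H be a subgroup of G. The end space of the quotient graph H\Γ(G,S) has at least two elements (e(G,H) ≥ 2) if and only if there exists a set X of right cosets of H in G such that both X and its complement in H\G are infinite, and for every g ∈ G the symmetric difference Xg Δ X is finite, where Xg = { Hkg : Hk ∈ X } (i.e. X is almost invariant under the right action of G on H\G). -/

import Mathlib

/-- The Cayley graph of a group `G` with respect to a set `S ⊆ G`:
two distinct elements `g h` are adjacent iff `g⁻¹ * h ∈ S ∪ S⁻¹`. -/
def cayleyGraph {G : Type*} [Group G] (S : Set G) : SimpleGraph G where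
  Adj g h := g ≠ h ∧ g⁻¹ * h ∈ S ∪ S⁻¹
  symm := by
    refine ⟨?_⟩
    rintro g h ⟨hne, hmem⟩
    refine ⟨hne.symm, ?_⟩
    rcases hmem with h1 | h1
    · exact Or.inr (Set.mem_inv.mpr (by rwa [show (h⁻¹ * g)⁻¹ = g⁻¹ * h by group]))
    · have := Set.mem_inv.mp h1
      exact Or.inl (by rwa [show (g⁻¹ * h)⁻¹ = h⁻¹ * g by group] at this)
  loopless := ⟨fun g h => h.1 rfl⟩

/-- The quotient graph `H\Γ(G,S)` of the Cayley graph of `G` with respect to `S` by the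
left action of a subgroup `H`: vertices are the right cosets `Hg`, and two distinct
cosets are adjacent iff one is obtained from the other by right multiplication by an
element of `S ∪ S⁻¹`. -/
def quotientGraph {G : Type*} [Group G] (S : Set G) (H : Subgroup G) :
    SimpleGraph (Quotient (QuotientGroup.rightRel H)) where
  Adj x y := x ≠ y ∧ ∃ k s, s ∈ S ∪ S⁻¹ ∧ x = Quotient.mk _ k ∧ y = Quotient.mk _ (k * s)
  symm := by
    refine ⟨?_⟩
    rintro x y ⟨hne, k, s, hs, rfl, rfl⟩
    refine ⟨hne.symm, k * s, s⁻¹, ?_, rfl, by rw [mul_assoc, mul_inv_cancel, mul_one]⟩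
    rcases hs with h1 | h1
    · exact Or.inr (Set.inv_mem_inv.mpr h1)
    · exact Or.inl (by simpa using Set.mem_inv.mp h1)
  loopless := ⟨fun x h => h.1 rfl⟩

/-- Right multiplication by `g` on the set `H\G` of right cosets: `Hk ↦ Hkg`. -/
def rightCosetMul {G : Type*} [Group G] (H : Subgroup G) (g : G) :
    Quotient (QuotientGroup.rightRel H) → Quotient (QuotientGroup.rightRel H) :=
  Quotient.map' (· * g) (by
    intro a b hab
    rw [QuotientGroup.rightRel_apply] at hab ⊢
    simpa [mul_assoc] using hab)

section SageevAux

open SimpleGraph CategoryTheory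

variable {G : Type*} [Group G] {S : Set G} {H : Subgroup G}

lemma rcm_mk (g k : G) :
    rightCosetMul H g (Quotient.mk (QuotientGroup.rightRel H) k)
      = Quotient.mk (QuotientGroup.rightRel H) (k * g) := rfl

lemma rcm_comp (g h : G) (x : Quotient (QuotientGroup.rightRel H)) :
    rightCosetMul H h (rightCosetMul H g x) = rightCosetMul H (g * h) x := by
  obtain ⟨k, rfl⟩ := Quotient.exists_rep x
  show Quotient.mk _ (k * g * h) = Quotient.mk _ (k * (g * h))
  rw [mul_assoc]

lemma rcm_one (x : Quotient (QuotientGroup.rightRel H)) : rightCosetMul H 1 x = x := by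
  obtain ⟨k, rfl⟩ := Quotient.exists_rep x
  show Quotient.mk _ (k * 1) = Quotient.mk _ k
  rw [mul_one]

lemma rcm_leftInv (g : G) :
    Function.LeftInverse (rightCosetMul H g⁻¹) (rightCosetMul H g) :=
  fun x => by rw [rcm_comp, mul_inv_cancel, rcm_one]

lemma rcm_inj (g : G) : Function.Injective (rightCosetMul (G := G) H g) :=
  (rcm_leftInv g).injective

lemma rcm_image_inv (g : G) (X : Set (Quotient (QuotientGroup.rightRel H))) :
    rightCosetMul H g⁻¹ '' (rightCosetMul H g '' X) = X := by
  rw [← Set.image_comp]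
  have h : rightCosetMul H g⁻¹ ∘ rightCosetMul H g = id := funext (rcm_leftInv g)
  rw [h, Set.image_id]

lemma qg_adj_iff {x y : Quotient (QuotientGroup.rightRel H)} :
    (quotientGraph S H).Adj x y ↔ x ≠ y ∧ ∃ s ∈ S ∪ S⁻¹, y = rightCosetMul H s x := by
  constructor
  · rintro ⟨hne, k, s, hs, rfl, rfl⟩
    exact ⟨hne, s, hs, rfl⟩
  · rintro ⟨hne, s, hs, rfl⟩
    obtain ⟨k, rfl⟩ := Quotient.exists_rep x
    exact ⟨hne, k, s, hs, rfl, rfl⟩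

lemma mem_SS_inv {s : G} (hs : s ∈ S ∪ S⁻¹) : s⁻¹ ∈ S ∪ S⁻¹ := by
  rcases hs with h | h
  · exact Or.inr (Set.inv_mem_inv.mpr h)
  · exact Or.inl (by simpa using Set.mem_inv.mp h)

lemma qg_preconnected (hSgen : Subgroup.closure S = ⊤) :
    (quotientGraph S H).Preconnected := by
  have key : ∀ g : G, ∀ x, (quotientGraph S H).Reachable x (rightCosetMul H g x) := by
    intro g
    have hg : g ∈ Subgroup.closure S := hSgen ▸ Subgroup.mem_top g
    induction hg using Subgroup.closure_induction with
    | mem s hs =>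
      intro x
      by_cases heq : x = rightCosetMul H s x
      · rw [← heq]
      · exact (qg_adj_iff.mpr ⟨heq, s, Or.inl hs, rfl⟩).reachable
    | one =>
      intro x; rw [rcm_one]
    | mul g h _ _ rg rh =>
      intro x
      have := (rg x).trans (rh (rightCosetMul H g x))
      rwa [rcm_comp] at this
    | inv g _ rg =>
      intro x
      have := rg (rightCosetMul H g⁻¹ x)
      rw [rcm_comp, inv_mul_cancel, rcm_one] at this
      exact this.symm
  intro x y
  obtain ⟨a, rfl⟩ := Quotient.exists_rep x
  obtain ⟨b, rfl⟩ := Quotient.exists_rep y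
  have := key (a⁻¹ * b) (Quotient.mk _ a)
  rwa [rcm_mk, mul_inv_cancel_left] at this

lemma qg_neighborSet_finite (hSfin : S.Finite) (x : Quotient (QuotientGroup.rightRel H)) :
    ((quotientGraph S H).neighborSet x).Finite := by
  apply ((hSfin.union hSfin.inv).image (fun s => rightCosetMul H s x)).subset
  rintro y hy
  obtain ⟨-, s, hs, rfl⟩ := qg_adj_iff.mp hy
  exact ⟨s, hs, rfl⟩

/-- Universe-polymorphic version of `SimpleGraph.end_componentCompl_infinite`. -/
lemma end_cc_infinite {V : Type*} {Γ : SimpleGraph V} (e : Γ.end) (K : (Finset V)ᵒᵖ) :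
    (e.val K).supp.Infinite := by
  refine (e.val K).infinite_iff_in_all_ranges.mpr (fun L h => ?_)
  exact ⟨e.val (Opposite.op L), (e.prop (CategoryTheory.opHomOfLE h))⟩

lemma exists_end_eval {V : Type*} (Γ : SimpleGraph V) [Γ.LocallyFinite]
    (hpc : Γ.Preconnected) (K : Finset V) (C : Γ.ComponentCompl ↑K)
    (hC : C.supp.Infinite) : ∃ e : Γ.end, e.val (Opposite.op K) = C := by
  haveI : Fact Γ.Preconnected := ⟨hpc⟩
  haveI : Infinite V := Set.infinite_univ_iff.mp (hC.mono (Set.subset_univ _))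
  set F := Γ.componentComplFunctor with hF
  haveI : ∀ j, Finite (F.obj j) := fun j => Γ.componentCompl_finite j.unop
  haveI : ∀ j, Nonempty (F.obj j) := fun j => Γ.componentCompl_nonempty_of_infinite j.unop
  have hML : F.IsMittagLeffler :=
    F.isMittagLeffler_of_exists_finite_range (fun j => ⟨j, 𝟙 j, Set.toFinite _⟩)
  haveI : ∀ j, Nonempty (F.toEventualRanges.obj j) := fun j => F.toEventualRanges_nonempty hML j
  have hsur := F.toEventualRanges.eval_section_surjective_of_surjective
      (F.surjective_toEventualRanges hML) (Opposite.op K)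
  have hCev : C ∈ F.eventualRange (Opposite.op K) := (Γ.infinite_iff_in_eventualRange C).mp hC
  obtain ⟨t, ht⟩ := hsur ⟨C, hCev⟩
  refine ⟨F.toEventualRangesSectionsEquiv t, ?_⟩
  have h2 : ((F.toEventualRangesSectionsEquiv t).val (Opposite.op K)) =
      (t.val (Opposite.op K)).val := rfl
  rw [h2]
  exact congrArg Subtype.val ht

end SageevAux

/-- **Sageev.** `e(G,H) ≥ 2` if and only if `H\G` has an almost invariant subset `X`
(under the right action of `G`) such that both `X` and its complement are infinite. -/
theorem sageev_relative_ends {G : Type*} [Group G] (S : Set G)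
    (hSfin : S.Finite) (hSgen : Subgroup.closure S = ⊤) (H : Subgroup G) :
    (∃ e₁ e₂ : (quotientGraph S H).end, e₁ ≠ e₂) ↔
      ∃ X : Set (Quotient (QuotientGroup.rightRel H)),
        X.Infinite ∧ Xᶜ.Infinite ∧
        ∀ g : G, (symmDiff (rightCosetMul H g '' X) X).Finite := by
  classical
  set Γ := quotientGraph S H with hΓ
  constructor
  · rintro ⟨e₁, e₂, hne⟩
    have hexK : ∃ Kop : (Finset (Quotient (QuotientGroup.rightRel H)))ᵒᵖ,
        e₁.val Kop ≠ e₂.val Kop := by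
      by_contra h
      push_neg at h
      exact hne (Subtype.ext (funext h))
    obtain ⟨Kop, hK⟩ := hexK
    set K := Kop.unop with hKdef
    set C₁ := e₁.val Kop with hC₁
    set C₂ := e₂.val Kop with hC₂
    set X := C₁.supp with hXdef
    have hX : X.Infinite := end_cc_infinite e₁ Kop
    have hsub : C₂.supp ⊆ Xᶜ := by
      rintro v ⟨hvK, hv2⟩ hv1
      obtain ⟨hvK', hv1'⟩ := hv1
      exact hK (hv1'.symm.trans hv2)
    have hXc : Xᶜ.Infinite := (end_cc_infinite e₂ Kop).mono hsub
    -- key adjacency fact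
    have key : ∀ (u : Quotient (QuotientGroup.rightRel H)) (s : G), s ∈ S ∪ S⁻¹ →
        u ∈ X → rightCosetMul H s u ∉ X → rightCosetMul H s u ∈ (↑K : Set _) := by
      intro u s hs hu hv
      by_contra hvK
      have hne' : u ≠ rightCosetMul H s u := fun h => hv (h ▸ hu)
      have hadj : Γ.Adj u (rightCosetMul H s u) := qg_adj_iff.mpr ⟨hne', s, hs, rfl⟩
      exact hv (SimpleGraph.ComponentCompl.mem_of_adj u _ hu hvK hadj)
    have hgen : ∀ s ∈ S ∪ S⁻¹, (symmDiff (rightCosetMul H s '' X) X).Finite := by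
      intro s hs
      have hsubK : symmDiff (rightCosetMul H s '' X) X ⊆
          (↑K : Set _) ∪ rightCosetMul H s '' (↑K : Set _) := by
        intro v hv
        rcases Set.mem_symmDiff.mp hv with ⟨⟨u, huX, rfl⟩, hvX⟩ | ⟨hvX, hvXs⟩
        · exact Or.inl (key u s hs huX hvX)
        · set u := rightCosetMul H s⁻¹ v with hu
          have huv : rightCosetMul H s u = v := by
            rw [hu, rcm_comp, inv_mul_cancel, rcm_one]
          have huX : u ∉ X := fun h => hvXs ⟨u, h, huv⟩
          have huK : u ∈ (↑K : Set _) := by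
            have := key v s⁻¹ (mem_SS_inv hs) hvX huX
            exact this
          exact Or.inr ⟨u, huK, huv⟩
      exact ((K.finite_toSet.union (K.finite_toSet.image _)).subset hsubK)
    refine ⟨X, hX, hXc, ?_⟩
    intro g
    have hg : g ∈ Subgroup.closure S := hSgen ▸ Subgroup.mem_top g
    induction hg using Subgroup.closure_induction with
    | mem s hs => exact hgen s (Or.inl hs)
    | one =>
      have h1 : rightCosetMul H (1 : G) '' X = X := by
        have : rightCosetMul H (1 : G) = id := funext rcm_one
        rw [this, Set.image_id]
      rw [h1, symmDiff_self]
      exact Set.finite_empty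
    | mul g h _ _ fg fh =>
      have himg : rightCosetMul H (g * h) '' X
          = rightCosetMul H h '' (rightCosetMul H g '' X) := by
        rw [← Set.image_comp]
        exact congrFun (congrArg _ (funext fun x => (rcm_comp g h x).symm)) X
      have tri : symmDiff (rightCosetMul H (g * h) '' X) X ⊆
          symmDiff (rightCosetMul H h '' (rightCosetMul H g '' X)) (rightCosetMul H h '' X)
            ∪ symmDiff (rightCosetMul H h '' X) X := by
        rw [himg]
        exact symmDiff_triangle _ _ _
      refine (Set.Finite.union ?_ fh).subset tri
      rw [← Set.image_symmDiff (rcm_inj h)]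
      exact fg.image _
    | inv g _ fg =>
      have himg : symmDiff (rightCosetMul H g⁻¹ '' X) X
          = rightCosetMul H g⁻¹ '' (symmDiff X (rightCosetMul H g '' X)) := by
        rw [Set.image_symmDiff (rcm_inj g⁻¹), rcm_image_inv]
      rw [himg, symmDiff_comm]
      exact fg.image _
  · rintro ⟨X, hXinf, hXcinf, hai⟩
    haveI : Γ.LocallyFinite := fun v => (qg_neighborSet_finite hSfin v).fintype
    have hpc : Γ.Preconnected := qg_preconnected hSgen
    haveI : Fact Γ.Preconnected := ⟨hpc⟩
    set Bset := ⋃ t ∈ S ∪ S⁻¹, symmDiff (rightCosetMul H t '' X) X with hBset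
    have hB : Bset.Finite := Set.Finite.biUnion (hSfin.union hSfin.inv) fun t _ => hai t
    set K : Finset (Quotient (QuotientGroup.rightRel H)) := hB.toFinset with hKdef
    have hKB : (↑K : Set _) = Bset := hB.coe_toFinset
    have cross : ∀ {v w}, Γ.Adj v w → v ∈ X → w ∉ X → w ∈ Bset := by
      intro v w hadj hv hw
      obtain ⟨hne', s, hs, rfl⟩ := qg_adj_iff.mp hadj
      refine Set.mem_biUnion hs (Set.mem_symmDiff.mpr (Or.inl ⟨⟨v, hv, rfl⟩, hw⟩))
    have dich : ∀ (v w : Quotient (QuotientGroup.rightRel H)) (hv : v ∉ (↑K : Set _))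
        (hw : w ∉ (↑K : Set _)), Γ.componentComplMk hv = Γ.componentComplMk hw →
        (v ∈ X ↔ w ∈ X) := by
      intro v w hv hw hcc
      have walkIff : ∀ (a b : ↥((↑K : Set (Quotient (QuotientGroup.rightRel H)))ᶜ)) (p : (Γ.induce ((↑K : Set _)ᶜ)).Walk a b),
          ((a : Quotient (QuotientGroup.rightRel H)) ∈ X ↔ (b : Quotient (QuotientGroup.rightRel H)) ∈ X) := by
        intro a b p
        induction p with
        | nil => exact Iff.rfl
        | @cons a c b h p ih =>
          have hadj : Γ.Adj ↑a ↑c := h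
          have step : ((a : Quotient (QuotientGroup.rightRel H)) ∈ X ↔ (c : Quotient (QuotientGroup.rightRel H)) ∈ X) := by
            constructor
            · intro haX
              by_contra hcX
              exact c.prop (hKB.symm.subset (cross hadj haX hcX))
            · intro hcX
              by_contra haX
              exact a.prop (hKB.symm.subset (cross hadj.symm hcX haX))
          exact step.trans ih
      have hr : (Γ.induce ((↑K : Set _)ᶜ)).Reachable ⟨v, hv⟩ ⟨w, hw⟩ :=
        SimpleGraph.ConnectedComponent.exact hcc
      obtain ⟨p⟩ := hr
      exact walkIff _ _ p
    have dichC : ∀ C : Γ.ComponentCompl (↑K : Set _), C.supp ⊆ X ∨ C.supp ⊆ Xᶜ := by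
      intro C
      by_cases hc : ∃ v ∈ C.supp, v ∈ X
      · left
        rintro w ⟨hwK, hwC⟩
        obtain ⟨v, ⟨hvK, hvC⟩, hvX⟩ := hc
        exact (dich v w hvK hwK (hvC.trans hwC.symm)).mp hvX
      · right
        intro w hw hwX
        exact hc ⟨w, hw, hwX⟩
    haveI hfin : Finite (Γ.ComponentCompl (↑K : Set _)) := Γ.componentCompl_finite K
    have findInf : ∀ Y : Set (Quotient (QuotientGroup.rightRel H)), Y.Infinite →
        ∃ C : Γ.ComponentCompl (↑K : Set _), (C.supp ∩ Y).Infinite := by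
      intro Y hY
      by_contra h
      push_neg at h
      have hcov : Y ⊆ (↑K : Set _) ∪ ⋃ C : Γ.ComponentCompl (↑K : Set _), (C.supp ∩ Y) := by
        intro v hv
        by_cases hvK : v ∈ (↑K : Set _)
        · exact Or.inl hvK
        · exact Or.inr (Set.mem_iUnion.mpr ⟨Γ.componentComplMk hvK, ⟨hvK, rfl⟩, hv⟩)
      exact hY ((K.finite_toSet.union (Set.finite_iUnion h)).subset hcov)
    obtain ⟨C, hC⟩ := findInf X hXinf
    obtain ⟨D, hD⟩ := findInf Xᶜ hXcinf
    have hCX : C.supp ⊆ X := by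
      rcases dichC C with h | h
      · exact h
      · obtain ⟨v, hv, hvX⟩ := hC.nonempty
        exact absurd (h hv) (fun hh => hh hvX)
    have hDX : D.supp ⊆ Xᶜ := by
      rcases dichC D with h | h
      · obtain ⟨v, hv, hvX⟩ := hD.nonempty
        exact absurd (h hv) hvX
      · exact h
    have hCD : C ≠ D := by
      intro h
      obtain ⟨v, hv⟩ := C.nonempty
      exact hDX (h ▸ hv) (hCX hv)
    obtain ⟨e₁, he₁⟩ := exists_end_eval Γ hpc K C (hC.mono Set.inter_subset_left)
    obtain ⟨e₂, he₂⟩ := exists_end_eval Γ hpc K D (hD.mono Set.inter_subset_left)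
    refine ⟨e₁, e₂, fun h => hCD ?_⟩
    rw [← he₁, ← he₂, h]
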